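/- arXiv:1510.02014 — 7 statements merged into one kernel-verified Lean document; each statement's English description precedes it below -/
import Mathlib

section
/- Let G be a finite group, N a characteristic subgroup of G, x ∈ G and α an automorphism of G, and let A = A_{x,α}. Let Ã denote the induced affine map of the quotient G/N, i.e., Ã = A_{xN, α̃} where α̃ is the automorphism of G/N induced by α. Then there exists a subset M ⊆ N such that ord(A) = ord(Ã) · lcm_{m ∈ M} ord(A_{m, (α|_N)^{ord(Ã)}}), where α|_N denotes the restriction of α to an automorphism of N. -/
/-!
The projection `G → G/N` intertwines `A = A_{x,α}` with `Ã = A_{xN, α̃}`, so `k = ord(Ã)` divides `ord(A)` and `ord(A) = k · ord(A^k)`. The power `A^k`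
is again affine, `A^k = A_{y, α^k}` with `y = A^k(1)`, and it fixes every coset `gN`. On `gN`,
transported to `N` by `n ↦ g n`, it acts as `A_{m_g, (α|_N)^k}` with `m_g = g⁻¹ y α^k(g) ∈ N`.
Hence `ord(A^k)` is the lcm of the orders of these maps, and `M = {m_g | g ∈ G}` works.
-/

/-- The bijective affine map `A_{x,α} : g ↦ x * α g` as a permutation of `G`. -/
def Aff {G : Type*} [Group G] (x : G) (α : G ≃* G) : Equiv.Perm G :=
  α.toEquiv.trans (Equiv.mulLeft x)

open Function

theorem orderOf_eq_lcm_of_pow_eq_one_iff {M M' ι : Type*} [Monoid M] [Monoid M'] {a : M}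
    {s : Finset ι} {b : ι → M'} (h : ∀ n : ℕ, a ^ n = 1 ↔ ∀ i ∈ s, b i ^ n = 1) :
    orderOf a = s.lcm fun i => orderOf (b i) :=
  Nat.dvd_right_iff_eq.mp fun n => by
    simp only [orderOf_dvd_iff_pow_eq_one, Finset.lcm_dvd_iff, h]

theorem orderOf_eq_mul_orderOf_pow_of_dvd {G : Type*} [Group G] {x : G} {k : ℕ}
    (hk : k ∣ orderOf x) : orderOf x = k * orderOf (x ^ k) := by
  rcases eq_or_ne k 0 with rfl | hk0
  · simpa using hk
  · rw [orderOf_pow_of_dvd hk0 hk, Nat.mul_div_cancel' hk]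

namespace Equiv.Perm

variable {X Y : Type*}

theorem semiconj_pow {π : X → Y} {f : Perm X} {g : Perm Y} (h : Semiconj π f g) (n : ℕ) :
    Semiconj π ⇑(f ^ n) ⇑(g ^ n) := by
  simpa only [coe_pow] using h.iterate_right n

theorem orderOf_dvd_of_semiconj {π : X → Y} (hπ : Surjective π) {f : Perm X} {g : Perm Y}
    (h : Semiconj π f g) : orderOf g ∣ orderOf f := by
  refine orderOf_dvd_of_pow_eq_one (Perm.ext fun y => ?_)
  obtain ⟨x, rfl⟩ := hπ y
  simpa using ((semiconj_pow h (orderOf f)).eq x).symm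

theorem orderOf_eq_lcm_of_semiconj {ι : Type*} [Fintype ι] {f : Perm X} {σ : ι → Perm Y}
    {e : ι → Y → X} (he : ∀ i, Injective (e i)) (hcover : ∀ x, ∃ i y, e i y = x)
    (h : ∀ i, Semiconj (e i) (σ i) f) :
    orderOf f = Finset.univ.lcm fun i => orderOf (σ i) := by
  refine orderOf_eq_lcm_of_pow_eq_one_iff fun n => ?_
  have hpow : ∀ i y, e i ((σ i ^ n) y) = (f ^ n) (e i y) := fun i =>
    (semiconj_pow (h i) n).eq
  constructor
  · intro hf i _
    refine Perm.ext fun y => he i ?_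
    rw [hpow, hf, one_apply, one_apply]
  · intro hσ
    refine Perm.ext fun x => ?_
    obtain ⟨i, y, rfl⟩ := hcover x
    simp [← hpow, hσ i (Finset.mem_univ i)]

end Equiv.Perm

section Aff

variable {G : Type*} [Group G]

theorem Aff_apply (x : G) (α : G ≃* G) (g : G) : Aff x α g = x * α g := rfl

theorem Aff_pow (x : G) (α : MulAut G) (n : ℕ) :
    Aff x α ^ n = Aff ((Aff x α ^ n) 1) (α ^ n) := by
  induction n with
  | zero => ext g; simp [Aff_apply]
  | succ n ih =>
    ext g
    rw [pow_succ', Equiv.Perm.mul_apply, Equiv.Perm.mul_apply, ih]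
    simp [Aff_apply, pow_succ', mul_assoc]

theorem Aff_semiconj_mk {N : Subgroup G} [N.Normal] (x : G) (α : G ≃* G)
    (β : G ⧸ N ≃* G ⧸ N) (hβ : ∀ g : G, β g = α g) :
    Semiconj ((↑) : G → G ⧸ N) (Aff x α) (Aff (x : G ⧸ N) β) := fun g => by
  simp [Aff_apply, hβ]

theorem Aff_semiconj_mul_left {N : Subgroup G} {φ : G ≃* G} {ψ : N ≃* N}
    (hψ : ∀ n : N, (ψ n : G) = φ n) (y g : G) (hg : g⁻¹ * Aff y φ g ∈ N) :
    Semiconj (fun n : N => g * n) (Aff ⟨_, hg⟩ ψ) (Aff y φ) := fun n => by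
  simp [Aff_apply, hψ, mul_assoc]

theorem orderOf_Aff_eq_lcm [Fintype G] {N : Subgroup G} {φ : G ≃* G} {ψ : N ≃* N}
    (hψ : ∀ n : N, (ψ n : G) = φ n) (y : G) (hy : ∀ g : G, g⁻¹ * Aff y φ g ∈ N) :
    orderOf (Aff y φ) = Finset.univ.lcm fun g => orderOf (Aff ⟨_, hy g⟩ ψ) :=
  Equiv.Perm.orderOf_eq_lcm_of_semiconj
    (fun g => (mul_right_injective g).comp Subtype.coe_injective)
    (fun g => ⟨g, 1, mul_one g⟩) (fun g => Aff_semiconj_mul_left hψ y g (hy g))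

end Aff

theorem MulAut.coe_pow_apply_of_restrict {G : Type*} [Group G] {N : Subgroup G}
    {α : MulAut G} {γ : MulAut N} (h : ∀ n : N, (γ n : G) = α n) (k : ℕ) (n : N) :
    ((γ ^ k) n : G) = (α ^ k) n := by
  induction k with
  | zero => rfl
  | succ k ih => rw [pow_succ', pow_succ', MulAut.mul_apply, MulAut.mul_apply, h, ih]

theorem stmt_2 {G : Type*} [Group G] [Fintype G] (N : Subgroup G) [N.Characteristic]
    (x : G) (α : G ≃* G)
    -- `β` is the automorphism of `G/N` induced by `α`:
    (β : (G ⧸ N) ≃* (G ⧸ N)) (hβ : ∀ g : G, β (g : G ⧸ N) = ((α g : G) : G ⧸ N))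
    -- `γ` is the restriction of `α` to an automorphism of `N`:
    (γ : N ≃* N) (hγ : ∀ n : N, (γ n : G) = α (n : G)) :
    ∃ M : Finset N,
      orderOf (Aff x α) =
        orderOf (Aff (x : G ⧸ N) β) *
          M.lcm fun m => orderOf (Aff m ((γ : MulAut N) ^ orderOf (Aff (x : G ⧸ N) β))) := by
  classical
  set k := orderOf (Aff (x : G ⧸ N) β)
  have hsemi := Aff_semiconj_mk x α β hβ
  have hk : k ∣ orderOf (Aff x α) :=
    Equiv.Perm.orderOf_dvd_of_semiconj QuotientGroup.mk_surjective hsemi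
  have hfix : ∀ g : G, g⁻¹ * Aff ((Aff x α ^ k) 1) ((α : MulAut G) ^ k) g ∈ N := fun g => by
    rw [← Aff_pow, ← QuotientGroup.eq, (Equiv.Perm.semiconj_pow hsemi k).eq, pow_orderOf_eq_one]
    rfl
  refine ⟨Finset.univ.image fun g => ⟨_, hfix g⟩, ?_⟩
  rw [Finset.lcm_image, orderOf_eq_mul_orderOf_pow_of_dvd hk]
  congr 1
  conv_lhs => rw [Aff_pow]
  exact orderOf_Aff_eq_lcm (MulAut.coe_pow_apply_of_restrict hγ k) _ hfix
end

section
/- Let G be a finite group and α an automorphism of G such that ord(α) divides |G|. Then the least common multiple over all x ∈ G of the orders of the permutations A_{x,α} divides |G|. -/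
theorem IsPGroup.pow_index_mem {p : ℕ} [Fact p.Prime] {P : Type*} [Group P]
    (hP : IsPGroup p P) (Q : Subgroup P) (t : P) : t ^ Q.index ∈ Q := by
  rcases eq_or_ne Q.index 0 with hQ | hQ
  · simp [hQ]
  set Z := Subgroup.zpowers t
  have hZ : Q.relIndex Z ≠ 0 := fun h => hQ (Subgroup.index_eq_zero_of_relIndex_eq_zero h)
  have : (Q.subgroupOf Z).Normal := Subgroup.normal_of_isMulCommutative _
  have ht : t ^ Q.relIndex Z ∈ Q :=
    Subgroup.mem_subgroupOf.mp ((Q.subgroupOf Z).pow_index_mem ⟨t, Subgroup.mem_zpowers t⟩)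
  have hdvd : Q.relIndex Z ∣ Q.index := by
    have : Q.FiniteIndex := ⟨hQ⟩
    have : (Q.subgroupOf Z).FiniteIndex := ⟨hZ⟩
    have hle : Q.relIndex Z ≤ Q.index := Q.relIndex_top_right ▸
      Q.relIndex_le_of_le_right le_top (Q.relIndex_top_right ▸ hQ)
    obtain ⟨m, hm⟩ := hP.index Q
    obtain ⟨e, he⟩ := (hP.to_subgroup Z).index (Q.subgroupOf Z)
    rw [Subgroup.relIndex, he, hm] at hle ⊢
    exact Nat.pow_dvd_pow p ((Nat.pow_le_pow_iff_right (Fact.out : p.Prime).one_lt).mp hle)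
  obtain ⟨k, hk⟩ := hdvd
  rw [hk, pow_mul]
  exact Q.pow_mem ht k

theorem Sylow.pow_eq_one_of_orderOf_eq_prime_pow {p : ℕ} [Fact p.Prime] {P : Type*} [Group P]
    [Finite P] {n : ℕ} (S : Sylow p P) (hS : ∀ u ∈ S, u ^ n = 1) {u : P} {k : ℕ}
    (hu : orderOf u = p ^ k) : u ^ n = 1 := by
  obtain ⟨T, huT⟩ := (IsPGroup.of_card (by rw [Nat.card_zpowers, hu]) :
    IsPGroup p (Subgroup.zpowers u)).exists_le_sylow
  obtain ⟨g, rfl⟩ := MulAction.exists_smul_eq P T S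
  have hconj : MulAut.conj g u ∈ ((g • T : Sylow p P) : Subgroup P) := by
    rw [Sylow.coe_subgroup_smul]
    exact Subgroup.smul_mem_pointwise_smul _ _ _ (huT (Subgroup.mem_zpowers u))
  simpa only [← map_pow, map_eq_one_iff _ (MulAut.conj g).injective] using hS _ hconj

theorem Monoid.exponent_dvd_of_forall_orderOf_eq_prime_pow {P : Type*} [Group P] [Finite P]
    {n : ℕ} (h : ∀ (p k : ℕ) (u : P), p.Prime → orderOf u = p ^ k → u ^ n = 1) :
    Monoid.exponent P ∣ n := by
  refine Monoid.exponent_dvd.mpr fun g => (Nat.dvd_iff_prime_pow_dvd_dvd n _).mpr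
    fun p k hp hpk => ?_
  have hu := orderOf_pow_orderOf_div (orderOf_pos g).ne' hpk
  exact hu ▸ orderOf_dvd_of_pow_eq_one (h p k _ hp hu)

namespace Subgroup.IsComplement'

variable {P : Type*} [Group P] {N K : Subgroup P} [N.Normal]

theorem pow_card_mem_left (h : N.IsComplement' K) (hKN : Nat.card K ∣ Nat.card N) (u : P) :
    u ^ Nat.card N ∈ N := by
  obtain ⟨c, hc⟩ := hKN
  rw [hc, pow_mul, ← h.symm.index_eq_card]
  exact pow_mem (N.pow_index_mem u) c

theorem exists_sylow_pow_card_eq_one [Finite P] (h : N.IsComplement' K)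
    (hKN : Nat.card K ∣ Nat.card N) (p : ℕ) [Fact p.Prime] :
    ∃ S : Sylow p P, ∀ u ∈ S, u ^ Nat.card N = 1 := by
  set Q : Subgroup P := ((default : Sylow p K) : Subgroup K).map K.subtype
  have hQK : Q ≤ K := map_subtype_le _
  have hQ : Nat.card Q = p ^ (Nat.card K).factorization p := by
    rw [card_map_of_injective K.subtype_injective, Sylow.card_eq_multiplicity]
  obtain ⟨S, hQS⟩ := ((default : Sylow p K).isPGroup'.map K.subtype).exists_le_sylow
  have hindex : (Q.subgroupOf S).index ∣ Nat.card N := by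
    have hS : Nat.card S = p ^ (Nat.card N).factorization p * Nat.card Q := by
      rw [Sylow.card_eq_multiplicity, ← h.card_mul_card, hQ,
        Nat.factorization_mul Nat.card_pos.ne' Nat.card_pos.ne', Finsupp.add_apply, pow_add]
    have hQS' := relIndex_mul_relIndex ⊥ Q S bot_le hQS
    rw [relIndex_bot_left, relIndex_bot_left, hS, mul_comm] at hQS'
    rw [← relIndex, Nat.eq_of_mul_eq_mul_right Nat.card_pos hQS']
    exact Nat.ordProj_dvd _ p
  refine ⟨S, fun u hu => ?_⟩
  have hK : u ^ Nat.card N ∈ K := by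
    obtain ⟨c, hc⟩ := hindex
    have hQ' := S.isPGroup'.pow_index_mem (Q.subgroupOf S) ⟨u, hu⟩
    rw [hc, pow_mul]
    exact pow_mem (hQK (mem_subgroupOf.mp hQ')) c
  exact disjoint_def.mp h.disjoint (h.pow_card_mem_left hKN u) hK

theorem exponent_dvd_card_left [Finite P] (h : N.IsComplement' K)
    (hKN : Nat.card K ∣ Nat.card N) : Monoid.exponent P ∣ Nat.card N :=
  Monoid.exponent_dvd_of_forall_orderOf_eq_prime_pow fun p _ _ hp hu =>
    have : Fact p.Prime := ⟨hp⟩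
    have ⟨S, hS⟩ := h.exists_sylow_pow_card_eq_one hKN p
    S.pow_eq_one_of_orderOf_eq_prime_pow hS hu

end Subgroup.IsComplement'

namespace SemidirectProduct

variable {N H : Type*} [Group N] [Group H] {φ : H →* MulAut N}

instance : (inl : N →* N ⋊[φ] H).range.Normal := by
  rw [range_inl_eq_ker_rightHom]
  infer_instance

instance [Finite N] [Finite H] : Finite (N ⋊[φ] H) :=
  Finite.of_equiv _ equivProd.symm

theorem isComplement'_range_inl_range_inr :
    (inl : N →* N ⋊[φ] H).range.IsComplement' (inr : H →* N ⋊[φ] H).range := by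
  refine Subgroup.isComplement'_of_disjoint_and_mul_eq_univ ?_ ?_
  · rw [Subgroup.disjoint_def]
    rintro _ ⟨n, rfl⟩ ⟨h, hh⟩
    have : h = 1 := by simpa using congrArg rightHom hh
    rw [← hh, this, map_one]
  · exact Set.eq_univ_of_forall fun x =>
      ⟨_, ⟨x.left, rfl⟩, _, ⟨x.right, rfl⟩, inl_left_mul_inr_right x⟩

variable (φ) in
def toPerm : N ⋊[φ] H →* Equiv.Perm N :=
  lift (MulAction.toPermHom N N) ((MulAut.toPerm N).comp φ) fun h => by
    ext n g
    change φ h n * g = φ h (n * (φ h).symm g)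
    rw [map_mul, MulEquiv.apply_symm_apply]

theorem toPerm_inl_mul_inr (x : N) (h : H) : toPerm φ (inl x * inr h) = Aff x (φ h) := by
  rw [map_mul, toPerm, lift_inl, lift_inr]
  rfl

end SemidirectProduct

open SemidirectProduct in
theorem stmt_5 {G : Type*} [Group G] [Fintype G] (α : MulAut G)
    (hα : orderOf α ∣ Fintype.card G) :
    (Finset.univ.lcm fun x : G => orderOf (Aff x α)) ∣ Fintype.card G := by
  set H := Subgroup.zpowers α
  have hG : Nat.card (inl : G →* G ⋊[H.subtype] H).range = Fintype.card G := by
    rw [← Nat.card_congr (MonoidHom.ofInjective inl_injective).toEquiv, Nat.card_eq_fintype_card]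
  have hH : Nat.card (inr : H →* G ⋊[H.subtype] H).range = orderOf α := by
    rw [← Nat.card_congr (MonoidHom.ofInjective inr_injective).toEquiv, Nat.card_zpowers]
  have hexp := isComplement'_range_inl_range_inr.exponent_dvd_card_left (hH ▸ hG ▸ hα)
  refine Finset.lcm_dvd fun x _ => ?_
  have hx : Aff x α = toPerm H.subtype (inl x * inr ⟨α, Subgroup.mem_zpowers α⟩) :=
    (toPerm_inl_mul_inr (φ := H.subtype) x ⟨α, Subgroup.mem_zpowers α⟩).symm
  rw [← hG, hx]
  exact (orderOf_map_dvd _ _).trans ((Monoid.order_dvd_exponent _).trans hexp)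
end

section
/- Let p be a prime, K a field of characteristic p, and d a positive integer. If A ∈ GL_d(K) is an invertible d × d matrix of finite multiplicative order n, then ν_p(n) ≤ ⌈log_p(d)⌉, i.e., the p-adic valuation of the order of A is at most the ceiling of the base-p logarithm of d. -/
/-!
Write the order of `A` as `p ^ k * m` with `p ∤ m`. Then `B = A ^ m` has order `p ^ k`, so in
characteristic `p` we get `(B - 1) ^ p ^ k = B ^ p ^ k - 1 = 0`: the matrix `B - 1` is nilpotent, hence
`(B - 1) ^ d = 0` by Cayley–Hamilton. Since `d ≤ p ^ ⌈log_p d⌉`, the same Frobenius identity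
gives `B ^ p ^ ⌈log_p d⌉ = 1`, so `p ^ k ∣ p ^ ⌈log_p d⌉`.
-/

open Polynomial in
theorem Matrix.pow_card_eq_zero_of_isNilpotent {R n : Type*} [CommRing R] [IsDomain R]
    [Fintype n] [DecidableEq n] {N : Matrix n n R} (hN : IsNilpotent N) :
    N ^ Fintype.card n = 0 := by
  have hchar : N.charpoly = X ^ Fintype.card n :=
    sub_eq_zero.mp (Matrix.isNilpotent_charpoly_sub_pow_of_isNilpotent hN).eq_zero
  simpa [hchar] using N.aeval_self_charpoly

theorem sub_one_pow_char_pow_eq_zero_iff {R : Type*} [Ring R] (p : ℕ) [Fact p.Prime]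
    [CharP R p] (x : R) (k : ℕ) : (x - 1) ^ p ^ k = 0 ↔ x ^ p ^ k = 1 := by
  rw [sub_pow_char_pow_of_commute p k (Commute.one_right x), one_pow, sub_eq_zero]

theorem Matrix.pow_char_pow_clog_card_eq_one {K n : Type*} [Field K] [Fintype n] [DecidableEq n]
    (p : ℕ) [Fact p.Prime] [CharP K p] {U : Matrix n n K} {k : ℕ}
    (hU : U ^ p ^ k = 1) : U ^ p ^ Nat.clog p (Fintype.card n) = 1 := by
  cases isEmpty_or_nonempty n
  · exact Subsingleton.elim _ _
  have hnil : IsNilpotent (U - 1) := ⟨p ^ k, (sub_one_pow_char_pow_eq_zero_iff p U k).mpr hU⟩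
  obtain ⟨j, hj⟩ := Nat.exists_eq_add_of_le (Nat.le_pow_clog (Fact.out : p.Prime).one_lt
    (Fintype.card n))
  rw [← sub_one_pow_char_pow_eq_zero_iff p, hj, pow_add,
    Matrix.pow_card_eq_zero_of_isNilpotent hnil, zero_mul]

theorem IsOfFinOrder.orderOf_pow_ordCompl {G : Type*} [Monoid G] {x : G} (hx : IsOfFinOrder x)
    (p : ℕ) : orderOf (x ^ ordCompl[p] (orderOf x)) = p ^ (orderOf x).factorization p := by
  have hn : orderOf x ≠ 0 := hx.orderOf_pos.ne'
  rw [orderOf_pow_of_dvd (Nat.ordCompl_pos p hn).ne' (Nat.ordCompl_dvd _ p),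
    Nat.div_div_self (Nat.ordProj_dvd _ p) hn]

theorem stmt_8_general {p : ℕ} (hp : p.Prime) (K : Type*) [Field K] [CharP K p]
    (d : ℕ) (A : GL (Fin d) K) (hA : IsOfFinOrder A) :
    (orderOf A).factorization p ≤ Nat.clog p d := by
  have : Fact p.Prime := ⟨hp⟩
  set B := A ^ ordCompl[p] (orderOf A)
  have hB : orderOf B = p ^ (orderOf A).factorization p := hA.orderOf_pow_ordCompl p
  have hBmat : (B : Matrix (Fin d) (Fin d) K) ^ p ^ Nat.clog p d = 1 := by
    simpa using Matrix.pow_char_pow_clog_card_eq_one p (U := (B : Matrix (Fin d) (Fin d) K))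
      (by rw [← Units.val_pow_eq_pow_val, ← hB, pow_orderOf_eq_one, Units.val_one])
  have hBpow : B ^ p ^ Nat.clog p d = 1 := Units.ext (by simpa using hBmat)
  rw [← Nat.pow_dvd_pow_iff_le_right hp.one_lt, ← hB]
  exact orderOf_dvd_of_pow_eq_one hBpow

theorem stmt_8 {p : ℕ} (hp : p.Prime) (K : Type*) [Field K] [CharP K p]
    (d : ℕ) (hd : 0 < d) (A : GL (Fin d) K) (hA : IsOfFinOrder A) :
    (orderOf A).factorization p ≤ Nat.clog p d :=
  stmt_8_general hp K d A hA
end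

section
/- Let G be a finite group, x ∈ G and α an automorphism of G. Then every cycle length of the permutation A_{x,α} of G (i.e., the cardinality of the orbit of any point g ∈ G under the cyclic group generated by A_{x,α}) is divisible by L_G(x,α) := ord(sh_α(x)) · ∏_p p^{ν_p(ord(α))}, where the product runs over all primes p dividing both ord(sh_α(x)) and ord(α). -/
/-- `sh_α(x) := x * α(x) * α²(x) * ⋯ * α^(ord(α)-1)(x)`. -/
noncomputable def sh {G : Type*} [Group G] (α : MulAut G) (x : G) : G :=
  ((List.range (orderOf α)).map fun i => (α ^ i) x).prod

/-!
Let `σ = A_{x,α}`, `m = ord α` and `s = sh_α(x)`. Since `σⁿ g = (x · α(x) ⋯ αⁿ⁻¹(x)) · αⁿ(g)`,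
the power `σᵐ` is left multiplication by `s`, whose cycles all have length `k = ord s`. For a point
`g` with period `ℓ` under `σ`, its period under `σᵐ` is `ℓ / gcd(ℓ, m)`, so `ℓ = k · gcd(ℓ, m)`.
If a prime `p` divides `k`, then `ν_p(ℓ) > ν_p(gcd(ℓ, m)) = min(ν_p(ℓ), ν_p(m))` forces
`ν_p(gcd(ℓ, m)) = ν_p(m)`, so the full `p`-part of `m` divides `gcd(ℓ, m) = ℓ / k`.
-/

open Function MulAction Subgroup

namespace Nat

theorem prod_prime_pow_dvd {S : Finset ℕ} (hS : ∀ p ∈ S, p.Prime) {e : ℕ → ℕ} {n : ℕ}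
    (h : ∀ p ∈ S, p ^ e p ∣ n) : ∏ p ∈ S, p ^ e p ∣ n :=
  Finset.prod_dvd_of_isRelPrime (fun p hp q hq hpq =>
    coprime_iff_isRelPrime.mp (coprime_pow_primes _ _ (hS p hp) (hS q hq) hpq)) h

theorem ordProj_dvd_gcd_of_eq_mul_gcd {ℓ k m p : ℕ} (hℓ : ℓ ≠ 0) (hm : m ≠ 0) (hp : p.Prime)
    (hpk : p ∣ k) (h : ℓ = k * gcd ℓ m) : ordProj[p] m ∣ gcd ℓ m := by
  have hk : k ≠ 0 := left_ne_zero_of_mul (h ▸ hℓ)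
  have hd : gcd ℓ m ≠ 0 := gcd_ne_zero_right hm
  have hval :
      ℓ.factorization p = k.factorization p + min (ℓ.factorization p) (m.factorization p) := by
    conv_lhs => rw [h]
    rw [factorization_mul hk hd, Finsupp.add_apply, factorization_gcd hℓ hm, Finsupp.inf_apply]
  have hkp : 0 < k.factorization p := hp.factorization_pos_of_dvd hk hpk
  have hmin : (gcd ℓ m).factorization p = m.factorization p := by
    rw [factorization_gcd hℓ hm, Finsupp.inf_apply]
    omega
  rw [← hmin]
  exact ordProj_dvd _ p

theorem mul_prod_ordProj_dvd_of_eq_mul_gcd {ℓ k m : ℕ} (h : ℓ = k * gcd ℓ m) :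
    k * ∏ p ∈ k.primeFactors ∩ m.primeFactors, ordProj[p] m ∣ ℓ := by
  rcases eq_or_ne ℓ 0 with rfl | hℓ
  · exact dvd_zero _
  conv_rhs => rw [h]
  refine Nat.mul_dvd_mul_left k (prod_prime_pow_dvd ?_ fun p hp => ?_)
  · exact fun p hp => prime_of_mem_primeFactors (Finset.mem_of_mem_inter_left hp)
  obtain ⟨hpk, hpm⟩ := Finset.mem_inter.mp hp
  exact ordProj_dvd_gcd_of_eq_mul_gcd hℓ (mem_primeFactors.mp hpm).2.2
    (prime_of_mem_primeFactors hpk) (dvd_of_mem_primeFactors hpk) h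

end Nat

theorem Function.minimalPeriod_eq_minimalPeriod_iterate_mul_gcd {X : Type*} (f : X → X) (x : X)
    (n : ℕ) : minimalPeriod f x = minimalPeriod f^[n] x * (minimalPeriod f x).gcd n := by
  rcases eq_or_ne n 0 with rfl | hn
  · simp
  rw [minimalPeriod_iterate_eq_div_gcd hn, Nat.div_mul_cancel (Nat.gcd_dvd_left _ _)]

theorem minimalPeriod_mul_left {M : Type*} [RightCancelMonoid M] (a b : M) :
    minimalPeriod (a * ·) b = orderOf a :=
  minimalPeriod_eq_minimalPeriod_iff.mpr fun n => by
    simp only [IsPeriodicPt, IsFixedPt, mul_left_iterate, mul_eq_right]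

theorem MulAction.card_orbit_zpowers {G X : Type*} [Group G] [MulAction G X] (a : G) (x : X) :
    Nat.card (orbit (zpowers a) x) = minimalPeriod (a • ·) x := by
  rw [Nat.card_congr (orbitZPowersEquiv a x), Nat.card_zmod]

section Aff

variable {G : Type*} [Group G] (x : G) (α : MulAut G)

theorem Aff_pow_apply (n : ℕ) (h : G) :
    (Aff x α ^ n) h = ((List.range n).map fun i => (α ^ i) x).prod * (α ^ n) h := by
  induction n generalizing h with
  | zero => simp
  | succ n ih =>
    rw [pow_succ, Equiv.Perm.mul_apply, ih, List.range_succ]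
    simp [Aff, pow_succ, mul_assoc]

theorem Aff_pow_orderOf : Aff x α ^ orderOf α = Equiv.mulLeft (sh α x) := by
  ext h
  rw [Aff_pow_apply, pow_orderOf_eq_one]
  rfl

theorem minimalPeriod_Aff_eq_orderOf_sh_mul_gcd (g : G) :
    minimalPeriod (Aff x α) g =
      orderOf (sh α x) * (minimalPeriod (Aff x α) g).gcd (orderOf α) := by
  rw [← minimalPeriod_mul_left (sh α x) g, ← Equiv.coe_mulLeft, ← Aff_pow_orderOf,
    Equiv.Perm.coe_pow]
  exact minimalPeriod_eq_minimalPeriod_iterate_mul_gcd _ g _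

end Aff

theorem stmt_11_general {G : Type*} [Group G] (x : G) (α : MulAut G) (g : G) :
    orderOf (sh α x) *
        ∏ p ∈ (orderOf (sh α x)).primeFactors ∩ (orderOf α).primeFactors,
          p ^ (orderOf α).factorization p ∣
      Nat.card (MulAction.orbit (Subgroup.zpowers (Aff x α)) g) := by
  rw [card_orbit_zpowers]
  exact Nat.mul_prod_ordProj_dvd_of_eq_mul_gcd (minimalPeriod_Aff_eq_orderOf_sh_mul_gcd x α g)

theorem stmt_11 {G : Type*} [Group G] [Fintype G] (x : G) (α : MulAut G) (g : G) :
    orderOf (sh α x) *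
        ∏ p ∈ (orderOf (sh α x)).primeFactors ∩ (orderOf α).primeFactors,
          p ^ (orderOf α).factorization p ∣
      Nat.card (MulAction.orbit (Subgroup.zpowers (Aff x α)) g) :=
  stmt_11_general x α g
end

section
/- Let G be a finite group, x ∈ G and α an automorphism of G. Then L_G(x,α) := ord(sh_α(x)) · ∏_p p^{ν_p(ord(α))} divides |G|, where the product runs over all primes p dividing both ord(sh_α(x)) and ord(α). -/
open Function

theorem Equiv.Perm.dvd_card_of_forall_dvd_minimalPeriod {X : Type*} [Fintype X]
    (σ : Equiv.Perm X) {k : ℕ} (h : ∀ x, k ∣ minimalPeriod σ x) : k ∣ Fintype.card X := by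
  classical
  rw [Fintype.card_congr (MulAction.selfEquivSigmaOrbits (Subgroup.zpowers σ) X),
    Fintype.card_sigma]
  exact Finset.dvd_sum fun ω _ => MulAction.minimalPeriod_eq_card (a := σ) (b := ω.out) ▸ h _

theorem Nat.prod_inter_primeFactors_pow_factorization_dvd (s : Finset ℕ) {n : ℕ} (hn : n ≠ 0) :
    ∏ p ∈ s ∩ n.primeFactors, p ^ n.factorization p ∣ n :=
  calc _ ∣ ∏ p ∈ n.primeFactors, p ^ n.factorization p :=
        Finset.prod_dvd_prod_of_subset _ _ _ Finset.inter_subset_right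
    _ = n := Nat.prod_factorization_pow_eq_self hn

theorem Nat.mul_prod_pow_factorization_dvd_of_dvd_mul_iff {ℓ m n : ℕ} (hm : 0 < m) (hn : 0 < n)
    (h : ∀ j, ℓ ∣ n * j ↔ m ∣ j) :
    m * ∏ p ∈ m.primeFactors ∩ n.primeFactors, p ^ n.factorization p ∣ ℓ := by
  obtain ⟨t, rfl⟩ : m ∣ ℓ := (h _).1 (dvd_mul_left _ _)
  obtain ⟨s, rfl⟩ : t ∣ n := by
    have := (h m).2 dvd_rfl
    rw [mul_comm n] at this
    exact Nat.dvd_of_mul_dvd_mul_left hm this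
  have hsm : Nat.Coprime s m := by
    refine Nat.coprime_of_dvd fun p hp ⟨s', hs'⟩ ⟨q, hq⟩ => ?_
    have hmq : m ∣ q := (h q).1 ⟨s', by rw [hs', hq]; ring⟩
    have hq0 : 0 < q := Nat.pos_of_mul_pos_left (hq ▸ hm)
    have := Nat.le_of_dvd hq0 hmq
    nlinarith [hp.two_le]
  refine mul_dvd_mul_left m (Nat.Coprime.dvd_of_dvd_mul_right ?_
    (Nat.prod_inter_primeFactors_pow_factorization_dvd _ hn.ne'))
  refine Nat.Coprime.prod_left fun p hp => Nat.Coprime.pow_left _ ?_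
  exact (Nat.Coprime.coprime_dvd_right
    (Nat.dvd_of_mem_primeFactors (Finset.mem_inter.1 hp).1) hsm).symm

section AffinePerm

variable {G : Type*} [Group G] (α : MulAut G) (x : G)

def affinePerm : Equiv.Perm G := Equiv.mulLeft x * α.toEquiv

theorem affinePerm_apply (g : G) : affinePerm α x g = x * α g := rfl

theorem affinePerm_pow_apply (k : ℕ) (g : G) :
    (affinePerm α x ^ k) g = ((List.range k).map fun i => (α ^ i) x).prod * (α ^ k) g := by
  induction k generalizing g with
  | zero => simp
  | succ k ih =>
    rw [pow_succ, Equiv.Perm.mul_apply, ih, affinePerm_apply, map_mul, List.range_succ,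
      List.map_append, List.prod_append, pow_succ, MulAut.mul_apply]
    simp only [List.map_cons, List.map_nil, List.prod_cons, List.prod_nil, mul_one, mul_assoc]

theorem affinePerm_pow_orderOf_apply (g : G) :
    (affinePerm α x ^ orderOf α) g = sh α x * g := by
  rw [affinePerm_pow_apply, pow_orderOf_eq_one, MulAut.one_apply, sh]

theorem minimalPeriod_affinePerm_dvd_orderOf_mul_iff (g : G) (j : ℕ) :
    minimalPeriod (affinePerm α x) g ∣ orderOf α * j ↔ orderOf (sh α x) ∣ j := by
  have hiter : (affinePerm α x)^[orderOf α] = (sh α x * ·) :=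
    funext (affinePerm_pow_orderOf_apply α x)
  rw [← isPeriodicPt_iff_minimalPeriod_dvd, IsPeriodicPt, IsFixedPt, iterate_mul, hiter,
    mul_left_iterate_apply, mul_eq_right, orderOf_dvd_iff_pow_eq_one]

end AffinePerm

theorem stmt_12 {G : Type*} [Group G] [Fintype G] (x : G) (α : MulAut G) :
    orderOf (sh α x) *
        ∏ p ∈ (orderOf (sh α x)).primeFactors ∩ (orderOf α).primeFactors,
          p ^ (orderOf α).factorization p ∣
      Fintype.card G :=
  (affinePerm α x).dvd_card_of_forall_dvd_minimalPeriod fun g =>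
    Nat.mul_prod_pow_factorization_dvd_of_dvd_mul_iff (orderOf_pos _) (orderOf_pos _)
      (minimalPeriod_affinePerm_dvd_orderOf_mul_iff α x g)
end

section
/- For every finite cyclic group G, 𝔉(G) = |G|; that is, the maximum over all automorphisms α of G of the least common multiple over x ∈ G of the orders of the permutations A_{x,α} equals the order of G. -/
/-- `𝔉(G)`: the maximum over automorphisms `α` of `G` of the lcm over `x ∈ G` of the
orders of the permutations `A_{x,α}`. -/
noncomputable def Frak (G : Type*) [Group G] [Fintype G] [DecidableEq G] : ℕ :=
  Finset.univ.sup fun α : G ≃* G => Finset.univ.lcm fun x : G => orderOf (Aff x α)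

open Subgroup

namespace Aff

variable {G : Type*} [Group G]

lemma pow_succ_apply (x : G) (α : MulAut G) (n : ℕ) (g : G) :
    (Aff x α ^ (n + 1)) g = x * α ((Aff x α ^ n) g) := by
  rw [pow_succ']
  rfl

lemma pow_apply (x : G) (α : MulAut G) (m : ℕ) (g : G) :
    (Aff x α ^ m) g = (Aff x α ^ m) 1 * (α ^ m) g := by
  induction m with
  | zero => simp
  | succ n ih =>
    rw [pow_succ_apply, pow_succ_apply, ih, map_mul, ← mul_assoc, pow_succ', MulAut.mul_apply]

lemma orderOf_refl (x : G) : orderOf (Aff x (MulEquiv.refl G)) = orderOf x :=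
  orderOf_injective (MulAction.toPermHom G G) MulAction.toPerm_injective x

section Commutative

variable [IsMulCommutative G]

/-- `N_m : x ↦ A_{x,α}^m(1) = x · α(x) ⋯ α^{m-1}(x)`. -/
def powOneHom (α : MulAut G) (m : ℕ) : G →* G where
  toFun x := (Aff x α ^ m) 1
  map_one' := by
    induction m with
    | zero => rfl
    | succ n ih => rw [pow_succ_apply, ih, map_one, one_mul]
  map_mul' x y := by
    induction m with
    | zero => simp
    | succ n ih =>
      simp only [pow_succ_apply, ih, map_mul, mul_assoc]
      rw [← mul_assoc y, mul_comm' y, mul_assoc]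

lemma powOneHom_apply (α : MulAut G) (m : ℕ) (x : G) : powOneHom α m x = (Aff x α ^ m) 1 := rfl

lemma pow_eq_one_of_generator {z : G} (hz : ∀ x, x ∈ zpowers z) {α : MulAut G} {m : ℕ}
    (h : (Aff z α ^ m) 1 = 1) (x : G) : Aff x α ^ m = 1 := by
  have hαz : (α ^ m) z = z := by
    have hz1 : Aff z α 1 = z := by simp [Aff]
    have hfix : (Aff z α ^ m) z = z :=
      calc (Aff z α ^ m) z = (Aff z α ^ m) (Aff z α 1) := by rw [hz1]
        _ = Aff z α ((Aff z α ^ m) 1) := by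
          rw [← Equiv.Perm.mul_apply, ← Equiv.Perm.mul_apply, pow_mul_comm']
        _ = z := by rw [h, hz1]
    rwa [pow_apply, h, one_mul] at hfix
  have hα : α ^ m = 1 := (MulEquiv.eq_iff_eq_on_generator hz _ _).mpr hαz
  have hN : powOneHom α m = 1 := (MonoidHom.eq_iff_eq_on_generator hz _ _).mpr h
  ext g
  rw [pow_apply, ← powOneHom_apply, hN, hα]
  simp

end Commutative

lemma lcm_orderOf_dvd_minimalPeriod [IsCyclic G] [Fintype G] {z : G} (hz : ∀ x, x ∈ zpowers z)
    (α : MulAut G) :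
    (Finset.univ.lcm fun x : G => orderOf (Aff x α)) ∣ Function.minimalPeriod (Aff z α) 1 :=
  Finset.lcm_dvd fun x _ => orderOf_dvd_of_pow_eq_one <| pow_eq_one_of_generator hz
    (by rw [Equiv.Perm.coe_pow, Function.iterate_minimalPeriod]) x

lemma lcm_orderOf_le_card [IsCyclic G] [Fintype G] (α : MulAut G) :
    (Finset.univ.lcm fun x : G => orderOf (Aff x α)) ≤ Fintype.card G := by
  obtain ⟨z, hz⟩ := IsCyclic.exists_generator (α := G)
  have hpos : 0 < Function.minimalPeriod (Aff z α) 1 :=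
    Function.minimalPeriod_pos_of_mem_periodicPts ((Aff z α).injective.mem_periodicPts 1)
  exact (Nat.le_of_dvd hpos (lcm_orderOf_dvd_minimalPeriod hz α)).trans
    Function.minimalPeriod_le_card

end Aff

theorem stmt_13 (G : Type*) [Group G] [Fintype G] [DecidableEq G] [IsCyclic G] :
    Frak G = Fintype.card G := by
  refine le_antisymm (Finset.sup_le fun α _ => Aff.lcm_orderOf_le_card α) ?_
  calc Fintype.card G
      = Finset.univ.lcm (orderOf (G := G)) := by
        rw [Monoid.lcm_orderOf_eq_exponent, IsCyclic.exponent_eq_card, Nat.card_eq_fintype_card]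
    _ = Finset.univ.lcm fun x : G => orderOf (Aff x (MulEquiv.refl G)) := by
        simp only [Aff.orderOf_refl]
    _ ≤ Frak G :=
        Finset.le_sup (f := fun α : G ≃* G => Finset.univ.lcm fun x : G => orderOf (Aff x α))
          (Finset.mem_univ _)
end

section
/- For every positive integer n, the dihedral group D_n of order 2n satisfies 𝔉(D_n) = 2n; that is, the maximum over all automorphisms α of D_n of the least common multiple over x ∈ D_n of the orders of the permutations A_{x,α} equals the order of D_n. -/
/-!
For `n ≠ 2` every automorphism of `D_n` has the form `r i ↦ r (a * i)`, `sr i ↦ sr (b + a * i)`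
with `a` a unit of `ZMod n`. The square of each affine map `g ↦ x * α g` then acts on the
rotations and on the reflections by maps `i ↦ a ^ 2 * i + d` of `ZMod n`. If `k ≤ n` is the length
of the orbit of `0` under `i ↦ a ^ 2 * i + 1`, then `∑ j < k, a ^ (2 * j) = 0` and `a ^ (2 * k) = 1`,
so every `i ↦ a ^ 2 * i + d` has order dividing `k` and every affine map has order dividing
`2 * k ≤ 2 * n`. For `n = 2`, the six automorphisms of the Klein four-group are checked one by one.
Conversely, for the automorphism `r i ↦ r i`, `sr i ↦ sr (i + 1)` the map `g ↦ sr 0 * α g` sends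
`r i ↦ sr i ↦ r (i + 1)`, so it is a `2n`-cycle.
-/

open DihedralGroup Function Finset

@[simp]
lemma aff_apply {G : Type*} [Group G] (x : G) (α : G ≃* G) (g : G) : Aff x α g = x * α g := rfl

lemma iterate_mul_add_apply {R : Type*} [CommSemiring R] (u e x : R) (k : ℕ) :
    (fun i => u * i + e)^[k] x = u ^ k * x + (∑ j ∈ range k, u ^ j) * e := by
  induction k generalizing x with
  | zero => simp
  | succ k ih => rw [iterate_succ_apply, ih, geom_sum_succ']; ring

theorem exists_iterate_mul_add_eq_id {R : Type*} [CommRing R] [Fintype R] {u : R}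
    (hu : IsUnit u) :
    ∃ k, 0 < k ∧ k ≤ Fintype.card R ∧ ∀ e : R, (fun i => u * i + e)^[k] = id := by
  set f : R → R := fun i => u * i + 1
  have hf : Injective f := fun i j h => hu.mul_left_cancel (add_right_cancel h)
  refine ⟨minimalPeriod f 0, minimalPeriod_pos_of_mem_periodicPts (hf.mem_periodicPts 0),
    minimalPeriod_le_card, fun e => ?_⟩
  have hsum : ∑ j ∈ range (minimalPeriod f 0), u ^ j = 0 := by
    have h := iterate_minimalPeriod (f := f) (x := 0)
    rwa [iterate_mul_add_apply, mul_zero, zero_add, mul_one] at h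
  have hpow : u ^ minimalPeriod f 0 = 1 := by
    rw [← sub_eq_zero, ← geom_sum_mul, hsum, zero_mul]
  funext x
  simp [iterate_mul_add_apply, hsum, hpow]

namespace DihedralGroup

variable {n : ℕ}

lemma map_r {G F : Type*} [Monoid G] [FunLike F (DihedralGroup n) G]
    [MonoidHomClass F (DihedralGroup n) G] [NeZero n] (φ : F) (i : ZMod n) :
    φ (r i) = φ (r 1) ^ i.val := by
  rw [← map_pow, r_one_pow, ZMod.natCast_zmod_val]

lemma map_sr {G F : Type*} [Monoid G] [FunLike F (DihedralGroup n) G]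
    [MonoidHomClass F (DihedralGroup n) G] [NeZero n] (φ : F) (i : ZMod n) :
    φ (sr i) = φ (sr 0) * φ (r 1) ^ i.val := by
  rw [← map_r, ← map_mul, sr_mul_r, zero_add]

lemma eq_two_of_map_r_one_eq_sr (α : DihedralGroup n ≃* DihedralGroup n) {c : ZMod n}
    (h : α (r 1) = sr c) : n = 2 := by
  rw [← orderOf_r_one (n := n), ← MulEquiv.orderOf_eq α, h, orderOf_sr]

lemma map_eq_of_map_r_one_eq_r [NeZero n] (α : DihedralGroup n ≃* DihedralGroup n) {a : ZMod n}
    (h : α (r 1) = r a) : ∃ b, ∀ i, α (r i) = r (a * i) ∧ α (sr i) = sr (b + a * i) := by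
  have hr : ∀ i, α (r i) = r (a * i) := fun i => by
    rw [map_r, h, r_pow, ZMod.natCast_zmod_val]
  rcases hs : α (sr 0) with e | b
  · have hrot : ∀ g, ∃ j, α g = r j := by
      rintro (i | i)
      · exact ⟨_, hr i⟩
      · exact ⟨_, by rw [map_sr, hs, h, r_pow, r_mul_r]⟩
    obtain ⟨j, hj⟩ := hrot (α.symm (sr 0))
    simp at hj
  · exact ⟨b, fun i => ⟨hr i, by rw [map_sr, hs, ← map_r, hr, sr_mul_r]⟩⟩

lemma isUnit_of_map_eq (α : DihedralGroup n ≃* DihedralGroup n) {a b : ZMod n}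
    (hα : ∀ i, α (r i) = r (a * i) ∧ α (sr i) = sr (b + a * i)) : IsUnit a := by
  rcases hg : α.symm (r 1) with a' | c
  · have h := (hα a').1
    rw [← hg, MulEquiv.apply_symm_apply, r.injEq] at h
    exact IsUnit.of_mul_eq_one a' h.symm
  · have h := (hα c).2
    rw [← hg, MulEquiv.apply_symm_apply] at h
    simp at h

lemma exists_aff_sq_apply (α : DihedralGroup n ≃* DihedralGroup n) {a b : ZMod n}
    (hα : ∀ i, α (r i) = r (a * i) ∧ α (sr i) = sr (b + a * i)) (x : DihedralGroup n) :
    ∃ d d' : ZMod n, ∀ i, (Aff x α ^ 2) (r i) = r (a ^ 2 * i + d) ∧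
      (Aff x α ^ 2) (sr i) = sr (a ^ 2 * i + d') := by
  rcases x with c | c
  · refine ⟨c + a * c, b + a * b - a * c - c, fun i => ?_⟩
    simp only [sq, Equiv.Perm.mul_apply, aff_apply, hα, r_mul_r, r_mul_sr]
    constructor <;> congr 1 <;> ring
  · refine ⟨b + a * c - c, c + a * b - a * c, fun i => ?_⟩
    simp only [sq, Equiv.Perm.mul_apply, aff_apply, hα, sr_mul_r, sr_mul_sr]
    constructor <;> congr 1 <;> ring

lemma pow_eq_one_of_iterate_eq_id (P : Equiv.Perm (DihedralGroup n)) {f f' : ZMod n → ZMod n}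
    {k : ℕ} (hr : ∀ i, P (r i) = r (f i)) (hs : ∀ i, P (sr i) = sr (f' i))
    (hf : f^[k] = id) (hf' : f'^[k] = id) : P ^ k = 1 := by
  ext (i | i)
  · rw [Equiv.Perm.coe_pow, ← (Semiconj.iterate_right (fun i => (hr i).symm) k) i, hf]; rfl
  · rw [Equiv.Perm.coe_pow, ← (Semiconj.iterate_right (fun i => (hs i).symm) k) i, hf']; rfl

lemma exists_pow_aff_eq_one_of_map_eq [NeZero n] (α : DihedralGroup n ≃* DihedralGroup n)
    {a b : ZMod n} (hα : ∀ i, α (r i) = r (a * i) ∧ α (sr i) = sr (b + a * i)) :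
    ∃ M, 0 < M ∧ M ≤ 2 * n ∧ ∀ x, Aff x α ^ M = 1 := by
  obtain ⟨k, hk0, hkn, hk⟩ := exists_iterate_mul_add_eq_id ((isUnit_of_map_eq α hα).pow 2)
  rw [ZMod.card] at hkn
  refine ⟨2 * k, by omega, by omega, fun x => ?_⟩
  obtain ⟨d, d', hd⟩ := exists_aff_sq_apply α hα x
  rw [pow_mul]
  exact pow_eq_one_of_iterate_eq_id _ (fun i => (hd i).1) (fun i => (hd i).2) (hk d) (hk d')

lemma aff_pow_three_or_four (α : DihedralGroup 2 ≃* DihedralGroup 2) :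
    (∀ x, Aff x α ^ 3 = 1) ∨ ∀ x, Aff x α ^ 4 = 1 := by
  -- `α` is determined by `α (r 1)` and `α (sr 0)`, which turns the claim into a finite check.
  set ψ : DihedralGroup 2 → DihedralGroup 2 → DihedralGroup 2 → DihedralGroup 2 := fun p q g =>
    match g with
    | r i => p ^ i.val
    | sr i => q * p ^ i.val
  have haff : ∀ x, ⇑(Aff x α) = fun g => x * ψ (α (r 1)) (α (sr 0)) g := fun x => by
    funext g; rcases g with i | i
    exacts [congrArg (x * ·) (map_r α i), congrArg (x * ·) (map_sr α i)]
  have key : ∀ p q : DihedralGroup 2, p ≠ 1 → q ≠ 1 → p ≠ q →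
      (∀ x g, (fun g => x * ψ p q g)^[3] g = g) ∨ ∀ x g, (fun g => x * ψ p q g)^[4] g = g := by
    decide
  have hp : α (r 1) ≠ 1 := (map_ne_one_iff α α.injective).mpr (by decide)
  have hq : α (sr 0) ≠ 1 := (map_ne_one_iff α α.injective).mpr (by decide)
  have hpq : α (r 1) ≠ α (sr 0) := α.injective.ne (by decide)
  rcases key _ _ hp hq hpq with h | h
  · exact .inl fun x => Equiv.ext fun g => by rw [Equiv.Perm.coe_pow, haff]; exact h x g
  · exact .inr fun x => Equiv.ext fun g => by rw [Equiv.Perm.coe_pow, haff]; exact h x g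

lemma exists_pow_aff_eq_one [NeZero n] (α : DihedralGroup n ≃* DihedralGroup n) :
    ∃ M, 0 < M ∧ M ≤ 2 * n ∧ ∀ x, Aff x α ^ M = 1 := by
  rcases hα : α (r 1) with a | c
  · obtain ⟨b, hab⟩ := map_eq_of_map_r_one_eq_r α hα
    exact exists_pow_aff_eq_one_of_map_eq α hab
  · obtain rfl := eq_two_of_map_r_one_eq_sr α hα
    rcases aff_pow_three_or_four α with h | h
    exacts [⟨3, by norm_num, by norm_num, h⟩, ⟨4, by norm_num, by norm_num, h⟩]

def shiftReflections : DihedralGroup n ≃* DihedralGroup n where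
  toFun
    | r i => r i
    | sr i => sr (i + 1)
  invFun
    | r i => r i
    | sr i => sr (i - 1)
  left_inv := by rintro (i | i) <;> simp
  right_inv := by rintro (i | i) <;> simp
  map_mul' := by rintro (i | i) (j | j) <;> simp only [r_mul_r, r_mul_sr, sr_mul_r, sr_mul_sr] <;>
    congr 1 <;> ring

lemma aff_sr_zero_shiftReflections_apply_r (i : ZMod n) :
    Aff (sr 0) shiftReflections (r i) = sr i := by
  simp [shiftReflections]

lemma aff_sr_zero_shiftReflections_sq_apply_r (i : ZMod n) :
    (Aff (sr 0) shiftReflections ^ 2) (r i) = r (i + 1) := by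
  simp [sq, shiftReflections]

lemma two_mul_dvd_orderOf_aff_sr_zero_shiftReflections :
    2 * n ∣ orderOf (Aff (sr 0) (shiftReflections (n := n))) := by
  set A := Aff (sr 0) (shiftReflections (n := n))
  have hsq : ∀ j : ℕ, (A ^ (2 * j)) (r 0) = r j := fun j => by
    rw [pow_mul, Equiv.Perm.coe_pow,
      ← (Semiconj.iterate_right (fun i => (aff_sr_zero_shiftReflections_sq_apply_r i).symm) j) 0]
    simp
  have hfix : (A ^ orderOf A) (r 0) = r 0 := by rw [pow_orderOf_eq_one]; rfl
  obtain ⟨j, hj | hj⟩ := Nat.even_or_odd' (orderOf A)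
  · rw [hj, hsq, r.injEq, ZMod.natCast_eq_zero_iff] at hfix
    exact hj ▸ mul_dvd_mul_left 2 hfix
  · rw [hj, pow_succ', Equiv.Perm.mul_apply, hsq, aff_sr_zero_shiftReflections_apply_r] at hfix
    cases hfix

end DihedralGroup

theorem stmt_14 (n : ℕ) [NeZero n] : Frak (DihedralGroup n) = 2 * n := by
  refine le_antisymm (Finset.sup_le fun α _ => ?_)
    (le_trans ?_ (Finset.le_sup (mem_univ DihedralGroup.shiftReflections)))
  · obtain ⟨M, hM0, hMle, hM⟩ := exists_pow_aff_eq_one α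
    exact (Nat.le_of_dvd hM0 (Finset.lcm_dvd fun x _ => orderOf_dvd_of_pow_eq_one (hM x))).trans hMle
  · have hpos : 0 < univ.lcm fun x => orderOf (Aff x (shiftReflections (n := n))) :=
      Nat.pos_of_ne_zero <| by simp [Finset.lcm_eq_zero_iff, (orderOf_pos _).ne']
    exact Nat.le_of_dvd hpos
      (two_mul_dvd_orderOf_aff_sr_zero_shiftReflections.trans (Finset.dvd_lcm (mem_univ _)))
end
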